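/- Let c > 0, d > 0, r > 0, T > 0. Define erf(z) = (2/√π)·∫₀^z e^{−t²} dt, φ(x) = (e^{√(c/d)·x}/2)·(1 + erf( −x/(2√(dT)) − √(cT) )), C₀ = (1/(2r))·√(π/(2dc)), and K(x) = C₀·(φ(x) + φ(−x)). Define D₀ = 1 − erf(√(cT)) and D₂ = c·D₀/(2d) − √(c/(πT))·e^{−cT}/(2d). Then lim_{x→0} ( K(x) − C₀·(D₀ + D₂·x²) ) / x³ = 0; in particular K(0) = C₀·(1 − erf(√(cT))). -/

import Mathlib

open MeasureTheory

/-- The Gauss error function. -/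
noncomputable def erf (z : ℝ) : ℝ :=
  (2 / Real.sqrt Real.pi) * ∫ t in (0 : ℝ)..z, Real.exp (-t ^ 2)

/-!
`K / C₀` is the symmetrization `q x = φ x + φ (-x)` of a smooth function, so `q` is even and its
first and third derivatives vanish at `0`. Taylor's theorem at order three therefore reduces the
claim to `q 0 = D₀` and `q'' 0 = 2 φ'' 0 = 2 D₂`, and the latter is a direct computation from
`erf' z = 2 / √π * exp (-z ^ 2)`.
-/

open Filter Topology Set Real
open scoped ContDiff

theorem Function.Even.iteratedDeriv_eq_zero_of_odd {𝕜 F : Type*} [NontriviallyNormedField 𝕜]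
    [CharZero 𝕜] [NormedAddCommGroup F] [NormedSpace 𝕜 F] {f : 𝕜 → F} (hf : f.Even) {n : ℕ}
    (hn : Odd n) : iteratedDeriv n f 0 = 0 := by
  have h := iteratedDeriv_comp_neg n f 0
  rw [show (fun x => f (-x)) = f from funext hf, neg_zero, hn.neg_one_pow, neg_one_smul,
    eq_neg_iff_add_eq_zero, ← two_smul 𝕜] at h
  exact (smul_eq_zero.mp h).resolve_left two_ne_zero

theorem Function.Even.tendsto_sub_taylor_div_cube {f : ℝ → ℝ} (hf : f.Even)
    (hf3 : ContDiff ℝ 3 f) :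
    Tendsto (fun x => (f x - (f 0 + iteratedDeriv 2 f 0 / 2 * x ^ 2)) / x ^ 3) (𝓝[≠] 0) (𝓝 0) := by
  have h := Real.taylor_tendsto (n := 3) convex_univ (mem_univ 0) hf3.contDiffOn
  simp only [taylorWithinEval_succ, taylor_within_zero_eval, iteratedDerivWithin_univ,
    Nat.reduceAdd, hf.iteratedDeriv_eq_zero_of_odd odd_one,
    hf.iteratedDeriv_eq_zero_of_odd (by decide : Odd 3), nhdsWithin_univ] at h
  refine (h.mono_left nhdsWithin_le_nhds).congr fun x => ?_
  simp only [CharP.cast_eq_zero, zero_add, Nat.factorial, Nat.cast_one, mul_one, inv_one,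
    sub_zero, pow_one, one_mul, smul_eq_mul, mul_zero, add_zero, Nat.succ_eq_add_one,
    Nat.cast_ofNat, Nat.reduceAdd, mul_inv_rev]
  ring

theorem iteratedDeriv_add_comp_neg {𝕜 F : Type*} [NontriviallyNormedField 𝕜]
    [NormedAddCommGroup F] [NormedSpace 𝕜 F] {f : 𝕜 → F} {n : ℕ} (hf : ContDiff 𝕜 n f) (x : 𝕜) :
    iteratedDeriv n (fun y => f y + f (-y)) x =
      iteratedDeriv n f x + (-1 : 𝕜) ^ n • iteratedDeriv n f (-x) := by
  have hf_neg : ContDiff 𝕜 n fun y => f (-y) := hf.comp contDiff_neg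
  rw [iteratedDeriv_fun_add hf.contDiffAt hf_neg.contDiffAt, iteratedDeriv_comp_neg]

theorem hasDerivAt_erf (z : ℝ) : HasDerivAt erf (2 / √π * exp (-z ^ 2)) z :=
  ((by fun_prop : Continuous fun t : ℝ => exp (-t ^ 2)).integral_hasStrictDerivAt 0 z)
    |>.hasDerivAt.const_mul _

theorem deriv_erf : deriv erf = fun z => 2 / √π * exp (-z ^ 2) :=
  funext fun z => (hasDerivAt_erf z).deriv

theorem differentiable_erf : Differentiable ℝ erf := fun z => (hasDerivAt_erf z).differentiableAt

theorem contDiff_erf : ContDiff ℝ ∞ erf :=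
  contDiff_infty_iff_deriv.mpr ⟨differentiable_erf, deriv_erf ▸ by fun_prop⟩

theorem erf_neg (z : ℝ) : erf (-z) = -erf z := by
  have h := intervalIntegral.integral_comp_neg (a := 0) (b := z) fun t : ℝ => exp (-t ^ 2)
  simp only [neg_sq, neg_zero] at h
  rw [erf, erf, h, intervalIntegral.integral_symm 0 (-z)]
  ring

noncomputable def erfProfile (a b v x : ℝ) : ℝ := exp (a * x) / 2 * (1 + erf (b * x + v))

theorem hasDerivAt_erfProfile (a b v x : ℝ) :
    HasDerivAt (erfProfile a b v)
      (a * erfProfile a b v x + b * (exp (a * x) / 2 * (2 / √π * exp (-(b * x + v) ^ 2)))) x := by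
  have hexp : HasDerivAt (fun y => exp (a * y) / 2) (exp (a * x) * (a * 1) / 2) x :=
    ((hasDerivAt_id x).const_mul a).exp.div_const 2
  have herf : HasDerivAt (fun y => 1 + erf (b * y + v))
      (2 / √π * exp (-(b * x + v) ^ 2) * (b * 1)) x :=
    ((hasDerivAt_erf _).comp x (((hasDerivAt_id x).const_mul b).add_const v)).const_add 1
  exact (hexp.mul herf).congr_deriv (by unfold erfProfile; ring)

theorem contDiff_erfProfile (a b v : ℝ) : ContDiff ℝ ∞ (erfProfile a b v) := by
  unfold erfProfile
  have := contDiff_erf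
  fun_prop

theorem iteratedDeriv_two_erfProfile_zero (a b v : ℝ) :
    iteratedDeriv 2 (erfProfile a b v) 0 =
      a ^ 2 / 2 * (1 + erf v) + (a * b - b ^ 2 * v) * (2 / √π * exp (-v ^ 2)) := by
  have hexp : HasDerivAt (fun y => exp (a * y) / 2) (a / 2) 0 := by
    simpa using ((hasDerivAt_id (0 : ℝ)).const_mul a).exp.div_const 2
  have hgauss : HasDerivAt (fun y => 2 / √π * exp (-(b * y + v) ^ 2))
      (2 / √π * exp (-v ^ 2) * (-2 * v * b)) 0 := by
    have := ((((hasDerivAt_id (0 : ℝ)).const_mul b).add_const v).pow 2).neg.exp.const_mul (2 / √π)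
    simp only [id_eq, Pi.neg_apply, Pi.pow_apply, mul_zero, zero_add, Nat.cast_ofNat,
      Nat.add_one_sub_one, pow_one, mul_one, mul_neg] at this
    exact this.congr_deriv (by ring)
  have h := ((hasDerivAt_erfProfile a b v 0).const_mul a).fun_add
    ((hexp.fun_mul hgauss).const_mul b)
  rw [iteratedDeriv_succ, iteratedDeriv_one,
    funext fun x => (hasDerivAt_erfProfile a b v x).deriv]
  refine h.deriv.trans ?_
  simp only [erfProfile, mul_zero, exp_zero, one_div, zero_add, neg_mul, mul_neg]
  ring

theorem iteratedDeriv_two_erfProfile_delay_zero {c d T : ℝ} (hc : 0 < c) (hd : 0 < d)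
    (hT : 0 < T) :
    iteratedDeriv 2 (erfProfile √(c / d) (-(2 * √(d * T))⁻¹) (-√(c * T))) 0 =
      c * (1 - erf √(c * T)) / (2 * d) - √(c / (π * T)) * exp (-(c * T)) / (2 * d) := by
  obtain ⟨δ, hδ, rfl⟩ : ∃ δ, 0 < δ ∧ δ ^ 2 = d := ⟨√d, sqrt_pos.2 hd, sq_sqrt hd.le⟩
  obtain ⟨τ, hτ, rfl⟩ : ∃ τ, 0 < τ ∧ τ ^ 2 = T := ⟨√T, sqrt_pos.2 hT, sq_sqrt hT.le⟩
  have hπ : 0 < √π := sqrt_pos.2 pi_pos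
  rw [iteratedDeriv_two_erfProfile_zero, erf_neg]
  simp only [neg_sq]
  rw [sq_sqrt (by positivity), sq_sqrt (by positivity), sqrt_div hc.le, sqrt_div hc.le,
    sqrt_mul hc.le, sqrt_mul (sq_nonneg δ), sqrt_mul pi_pos.le, sqrt_sq hδ.le, sqrt_sq hτ.le]
  field_simp
  ring

theorem stmt18_general (c d T : ℝ) (hc : 0 < c) (hd : 0 < d) (hT : 0 < T)
    (φ K : ℝ → ℝ) (C₀ D₀ D₂ : ℝ)
    (hφ : ∀ x : ℝ, φ x =
      (Real.exp (Real.sqrt (c / d) * x) / 2) *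
        (1 + erf (-(x / (2 * Real.sqrt (d * T))) - Real.sqrt (c * T))))
    (hK : ∀ x : ℝ, K x = C₀ * (φ x + φ (-x)))
    (hD₀ : D₀ = 1 - erf (Real.sqrt (c * T)))
    (hD₂ : D₂ = c * D₀ / (2 * d) -
      Real.sqrt (c / (Real.pi * T)) * Real.exp (-(c * T)) / (2 * d)) :
    Filter.Tendsto (fun x : ℝ => (K x - C₀ * (D₀ + D₂ * x ^ 2)) / x ^ 3)
      (nhdsWithin 0 {(0 : ℝ)}ᶜ) (nhds 0) ∧
    K 0 = C₀ * (1 - erf (Real.sqrt (c * T))) := by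
  have hφ_eq : φ = erfProfile √(c / d) (-(2 * √(d * T))⁻¹) (-√(c * T)) :=
    funext fun x => by rw [hφ, erfProfile]; ring_nf
  have hφ_smooth : ContDiff ℝ ∞ φ := hφ_eq ▸ contDiff_erfProfile _ _ _
  have hq_even : (fun x => φ x + φ (-x)).Even := fun x => by simp only [neg_neg, add_comm]
  have hq_smooth : ContDiff ℝ 3 fun x => φ x + φ (-x) :=
    contDiff_infty.mp (hφ_smooth.add (hφ_smooth.comp contDiff_neg)) 3
  have hq₀ : φ 0 + φ (-0) = D₀ := by
    simp only [neg_zero, hφ_eq, erfProfile, mul_zero, exp_zero, zero_add, erf_neg, hD₀]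
    ring
  have hq₂ : iteratedDeriv 2 (fun x => φ x + φ (-x)) 0 / 2 = D₂ := by
    rw [iteratedDeriv_add_comp_neg (contDiff_infty.mp hφ_smooth 2), neg_zero, hφ_eq,
      iteratedDeriv_two_erfProfile_delay_zero hc hd hT, hD₂, hD₀]
    norm_num
  have h := (hq_even.tendsto_sub_taylor_div_cube hq_smooth).const_mul C₀
  rw [mul_zero, hq₀, hq₂] at h
  exact ⟨h.congr fun x => by rw [hK]; ring, by rw [hK, ← hD₀, ← hq₀]⟩

theorem stmt18 (c d r T : ℝ) (hc : 0 < c) (hd : 0 < d) (hr : 0 < r) (hT : 0 < T)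
    (φ K : ℝ → ℝ) (C₀ D₀ D₂ : ℝ)
    (hφ : ∀ x : ℝ, φ x =
      (Real.exp (Real.sqrt (c / d) * x) / 2) *
        (1 + erf (-(x / (2 * Real.sqrt (d * T))) - Real.sqrt (c * T))))
    (hC₀ : C₀ = (1 / (2 * r)) * Real.sqrt (Real.pi / (2 * d * c)))
    (hK : ∀ x : ℝ, K x = C₀ * (φ x + φ (-x)))
    (hD₀ : D₀ = 1 - erf (Real.sqrt (c * T)))
    (hD₂ : D₂ = c * D₀ / (2 * d) -
      Real.sqrt (c / (Real.pi * T)) * Real.exp (-(c * T)) / (2 * d)) :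
    Filter.Tendsto (fun x : ℝ => (K x - C₀ * (D₀ + D₂ * x ^ 2)) / x ^ 3)
      (nhdsWithin 0 {(0 : ℝ)}ᶜ) (nhds 0) ∧
    K 0 = C₀ * (1 - erf (Real.sqrt (c * T))) :=
  stmt18_general c d T hc hd hT φ K C₀ D₀ D₂ hφ hK hD₀ hD₂
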